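/- Let n ≥ 2, 1 ≤ k ≤ n−1, and δ₀ ∈ (0,1). There exists a constant c'_{n,k} > 0 depending only on n and k with the following property. Let λ₁ ≥ λ₂ ≥ … ≥ λ_n > 0, set κ_α = 1/λ_α, and let ξ₁,…,ξ_n ∈ ℝ satisfy |ξ_α/λ_α| < δ₀·|ξ₁/λ₁| for every α ≥ 2. Then (1/(2σ_k(κ)))·Σ_{α≠β} (σ_{k−1}(κ|αβ)² − σ_k(κ|αβ)·σ_{k−2}(κ|αβ))·κ_α κ_β·(κ_α ξ_α − κ_β ξ_β)² ≥ c'_{n,k}·(1−δ₀)²·σ_{k−1}(κ|1)·κ₁³·ξ₁². -/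

import Mathlib

/-!
Keep only the pairs `(α, 1)` of the double sum. The angle condition gives
`(κ_α ξ_α - κ₁ ξ₁)² ≥ (1 - δ₀)² κ₁² ξ₁²`, and the Newton-type inequality `σ_k σ_{k-2} ≤ γ σ_{k-1}²`
in the `n - 2` variables `κ|α1`, with a constant `γ < 1` depending only on `n`, gives
`σ_{k-1}(κ|α1)² - σ_k(κ|α1) σ_{k-2}(κ|α1) ≥ (1 - γ) σ_{k-1}(κ|α1)²`. So the double sum is at least
`(1 - γ) (1 - δ₀)² κ₁³ ξ₁² Q` with `Q = Σ_{α ≠ 1} κ_α σ_{k-1}(κ|α1)²`. On the other side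
`σ_k(κ) σ_{k-1}(κ|1) = σ_k(κ|1) σ_{k-1}(κ|1) + κ₁ σ_{k-1}(κ|1)² ≤ n Q`: the first term is at most
`Q` because `σ_p σ_q ≤ Σ_a κ_a σ_{p-1}(κ|a) σ_q(κ|a)` for `q < p`, and the second is at most
`(n - 1) Q` because `κ₁` is the smallest entry and `σ_{k-1}(κ|1) ≤ Σ_{α ≠ 1} σ_{k-1}(κ|α1)`.
-/

open scoped Classical

noncomputable section

/-- The `j`-th elementary symmetric function of the family `κ` restricted to the
finite index set `s`; it is `1` for `j = 0`, and `0` for `j < 0` (or for `j`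
larger than the cardinality of `s`). -/
def sigmaE {ι : Type*} (s : Finset ι) (j : ℤ) (κ : ι → ℝ) : ℝ :=
  if 0 ≤ j then ∑ t ∈ s.powersetCard j.toNat, ∏ i ∈ t, κ i else 0

/-- `σ_j(κ)`, the `j`-th elementary symmetric polynomial evaluated at `κ`. -/
def sigmaV {ι : Type*} [Fintype ι] (j : ℤ) (κ : ι → ℝ) : ℝ :=
  sigmaE Finset.univ j κ

/-- `σ_j(κ|α)`: `σ_j` of `κ` with the `α`-th entry deleted. -/
def sigmaV1 {ι : Type*} [Fintype ι] [DecidableEq ι] (j : ℤ) (κ : ι → ℝ) (α : ι) : ℝ :=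
  sigmaE (Finset.univ.erase α) j κ

/-- `σ_j(κ|αβ)`: `σ_j` of `κ` with the `α`-th and `β`-th entries deleted. -/
def sigmaV2 {ι : Type*} [Fintype ι] [DecidableEq ι] (j : ℤ) (κ : ι → ℝ) (α β : ι) : ℝ :=
  sigmaE ((Finset.univ.erase α).erase β) j κ

/-- `σ_j(A)` for a real `n × n` matrix `A`: the `j`-th elementary symmetric function of
the eigenvalues of `A` when `A` is symmetric (= Hermitian over `ℝ`), junk value `0`
otherwise. -/
def sigmaMat {n : ℕ} (j : ℤ) (A : Matrix (Fin n) (Fin n) ℝ) : ℝ :=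
  if h : A.IsHermitian then sigmaV j h.eigenvalues else 0

/-- The Hessian quotient operator `F(A) = σ_n(A)/σ_{n-k}(A)`. -/
def Fquot {n : ℕ} (k : ℕ) (A : Matrix (Fin n) (Fin n) ℝ) : ℝ :=
  sigmaMat (n : ℤ) A / sigmaMat ((n : ℤ) - (k : ℤ)) A

open Finset

/-- The constant `γ_m < 1` of the Newton-type inequality `σ_j σ_{j-2} ≤ γ_m σ_{j-1}²` in `m`
variables; the recursion is exactly what adding one variable costs. -/
def newtonConst : ℕ → ℝ
  | 0 => 0
  | m + 1 => (1 + newtonConst m ^ 2) / 2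

theorem newtonConst_nonneg (m : ℕ) : 0 ≤ newtonConst m := by
  cases m <;> simp only [newtonConst] <;> positivity

theorem newtonConst_lt_one (m : ℕ) : newtonConst m < 1 := by
  induction m with
  | zero => norm_num [newtonConst]
  | succ m ih => simp only [newtonConst]; nlinarith [newtonConst_nonneg m]

theorem newtonConst_le_succ (m : ℕ) : newtonConst m ≤ newtonConst (m + 1) := by
  simp only [newtonConst]
  nlinarith [sq_nonneg (newtonConst m - 1)]

section ElementarySymmetric

variable {ι : Type*} {s : Finset ι} {κ : ι → ℝ}

theorem sigmaE_of_neg {j : ℤ} (hj : j < 0) : sigmaE s j κ = 0 :=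
  if_neg (not_le.2 hj)

theorem sigmaE_zero : sigmaE s 0 κ = 1 := by
  simp [sigmaE]

theorem sigmaE_natCast (m : ℕ) :
    sigmaE s m κ = ∑ t ∈ s.powersetCard m, ∏ i ∈ t, κ i := by
  rw [sigmaE, if_pos (Int.natCast_nonneg m), Int.toNat_natCast]

theorem sigmaE_empty {j : ℤ} (hj : j ≠ 0) : sigmaE (∅ : Finset ι) j κ = 0 := by
  unfold sigmaE
  split_ifs with h0
  · rw [powersetCard_eq_empty.2 (by simp; omega), sum_empty]
  · rfl

theorem sigmaE_insert [DecidableEq ι] {b : ι} (hb : b ∉ s) (j : ℤ) :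
    sigmaE (insert b s) j κ = sigmaE s j κ + κ b * sigmaE s (j - 1) κ := by
  rcases lt_trichotomy j 0 with hj | rfl | hj
  · simp [sigmaE_of_neg hj, sigmaE_of_neg (show j - 1 < 0 by omega)]
  · simp [sigmaE_zero, sigmaE_of_neg]
  obtain ⟨m, rfl⟩ : ∃ m : ℕ, j = m + 1 := ⟨j.toNat - 1, by omega⟩
  rw [add_sub_cancel_right, show (m : ℤ) + 1 = ((m + 1 : ℕ) : ℤ) by push_cast; ring,
    sigmaE_natCast, sigmaE_natCast, sigmaE_natCast]
  have hnot : ∀ t ∈ s.powersetCard m, b ∉ t := fun t ht hbt =>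
    hb ((mem_powersetCard.1 ht).1 hbt)
  rw [powersetCard_succ_insert hb, sum_union, sum_image, mul_sum]
  · exact congrArg _ (sum_congr rfl fun t ht => prod_insert (hnot t ht))
  · intro t ht u hu htu
    simpa [erase_insert (hnot t ht), erase_insert (hnot u hu)] using congrArg (erase · b) htu
  · refine disjoint_right.2 fun t ht ht' => ?_
    obtain ⟨u, -, rfl⟩ := mem_image.1 ht
    exact hb ((mem_powersetCard.1 ht').1 (mem_insert_self b u))

theorem sigmaE_nonneg (hκ : ∀ i ∈ s, 0 ≤ κ i) (j : ℤ) : 0 ≤ sigmaE s j κ := by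
  unfold sigmaE
  split_ifs
  · exact sum_nonneg fun t ht => prod_nonneg fun i hi => hκ i ((mem_powersetCard.1 ht).1 hi)
  · rfl

theorem sigmaE_pos (hκ : ∀ i ∈ s, 0 < κ i) {j : ℤ} (hj0 : 0 ≤ j) (hj : j ≤ #s) :
    0 < sigmaE s j κ := by
  obtain ⟨t, hts, htc⟩ := exists_subset_card_eq (show j.toNat ≤ #s by omega)
  rw [sigmaE, if_pos hj0]
  refine sum_pos' (fun u hu => prod_nonneg fun i hi =>
    (hκ i ((mem_powersetCard.1 hu).1 hi)).le) ⟨t, mem_powersetCard.2 ⟨hts, htc⟩, ?_⟩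
  exact prod_pos fun i hi => hκ i (hts hi)

variable [DecidableEq ι]

theorem sigmaE_succ_eq_zero (hκ : ∀ i ∈ s, 0 ≤ κ i) {j : ℤ} (hj : 0 ≤ j)
    (h : sigmaE s j κ = 0) : sigmaE s (j + 1) κ = 0 := by
  induction s using Finset.induction generalizing j with
  | empty => exact sigmaE_empty (by omega)
  | @insert b U hb ih =>
    have hκU : ∀ i ∈ U, 0 ≤ κ i := fun i hi => hκ i (mem_insert_of_mem hi)
    rw [sigmaE_insert hb] at h
    have hU : sigmaE U j κ = 0 := ((add_eq_zero_iff_of_nonneg (sigmaE_nonneg hκU j)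
      (mul_nonneg (hκ b (mem_insert_self b U)) (sigmaE_nonneg hκU _))).1 h).1
    rw [sigmaE_insert hb, ih hκU hj hU, add_sub_cancel_right, hU, mul_zero, add_zero]

theorem sigmaE_mul_le_sum_mul_erase (hκ : ∀ i ∈ s, 0 ≤ κ i) {p q : ℤ} (hqp : q < p) :
    sigmaE s p κ * sigmaE s q κ
      ≤ ∑ a ∈ s, κ a * (sigmaE (s.erase a) (p - 1) κ * sigmaE (s.erase a) q κ) := by
  induction s using Finset.induction generalizing p q with
  | empty =>
    rcases eq_or_ne p 0 with rfl | hp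
    · simp [sigmaE_empty hqp.ne]
    · simp [sigmaE_empty hp]
  | @insert b U hb ih =>
    have hκU : ∀ i ∈ U, 0 ≤ κ i := fun i hi => hκ i (mem_insert_of_mem hi)
    have hx : 0 ≤ κ b := hκ b (mem_insert_self b U)
    have hsplit : ∀ a ∈ U, ∀ r, sigmaE ((insert b U).erase a) r κ
        = sigmaE (U.erase a) r κ + κ b * sigmaE (U.erase a) (r - 1) κ := fun a ha r => by
      rw [erase_insert_of_ne (ne_of_mem_of_not_mem ha hb).symm,
        sigmaE_insert fun h => hb (mem_of_mem_erase h)]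
    have hexpand : ∑ a ∈ U, κ a * (sigmaE ((insert b U).erase a) (p - 1) κ
          * sigmaE ((insert b U).erase a) q κ)
        = ∑ a ∈ U, κ a * (sigmaE (U.erase a) (p - 1) κ * sigmaE (U.erase a) q κ)
          + κ b * ∑ a ∈ U, κ a * (sigmaE (U.erase a) (p - 1) κ * sigmaE (U.erase a) (q - 1) κ)
          + κ b * ∑ a ∈ U, κ a * (sigmaE (U.erase a) (p - 1 - 1) κ * sigmaE (U.erase a) q κ)
          + κ b ^ 2 * ∑ a ∈ U, κ a
              * (sigmaE (U.erase a) (p - 1 - 1) κ * sigmaE (U.erase a) (q - 1) κ) := by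
      simp only [mul_sum, ← sum_add_distrib]
      exact sum_congr rfl fun a ha => by rw [hsplit a ha, hsplit a ha]; ring
    have hextra : 0 ≤ ∑ a ∈ U, κ a
        * (sigmaE (U.erase a) (p - 1 - 1) κ * sigmaE (U.erase a) q κ) :=
      sum_nonneg fun a ha => mul_nonneg (hκU a ha) (mul_nonneg
        (sigmaE_nonneg (fun i hi => hκU i (mem_of_mem_erase hi)) _)
        (sigmaE_nonneg (fun i hi => hκU i (mem_of_mem_erase hi)) _))
    have h1 := ih hκU hqp
    have h2 := mul_le_mul_of_nonneg_left (ih hκU (show q - 1 < p by omega)) hx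
    have h3 := mul_le_mul_of_nonneg_left (ih hκU (show q - 1 < p - 1 by omega)) (sq_nonneg (κ b))
    rw [sum_insert hb, erase_insert hb, hexpand, sigmaE_insert hb, sigmaE_insert hb]
    nlinarith [mul_nonneg hx hextra]

theorem sum_sigmaE_erase (j : ℤ) :
    ∑ a ∈ s, sigmaE (s.erase a) j κ = ((#s : ℝ) - j) * sigmaE s j κ := by
  induction s using Finset.induction generalizing j with
  | empty =>
    rcases eq_or_ne j 0 with rfl | hj
    · simp
    · simp [sigmaE_empty hj]
  | @insert b U hb ih =>
    have hsplit : ∀ a ∈ U, sigmaE ((insert b U).erase a) j κ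
        = sigmaE (U.erase a) j κ + κ b * sigmaE (U.erase a) (j - 1) κ := fun a ha => by
      rw [erase_insert_of_ne (ne_of_mem_of_not_mem ha hb).symm,
        sigmaE_insert fun h => hb (mem_of_mem_erase h)]
    rw [sum_insert hb, erase_insert hb, sum_congr rfl hsplit, sum_add_distrib, ← mul_sum, ih, ih,
      card_insert_of_notMem hb, sigmaE_insert hb]
    push_cast
    ring

theorem mul_sq_sigmaE_le_card_mul_sum {c : ℝ} (hc : 0 ≤ c) (hκ : ∀ i ∈ s, c ≤ κ i) {j : ℤ}
    (hj : j < #s) :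
    c * sigmaE s j κ ^ 2 ≤ #s * ∑ a ∈ s, κ a * sigmaE (s.erase a) j κ ^ 2 := by
  have hκ0 : ∀ i ∈ s, 0 ≤ κ i := fun i hi => hc.trans (hκ i hi)
  have hle : sigmaE s j κ ≤ ∑ a ∈ s, sigmaE (s.erase a) j κ := by
    have hj' : (j : ℝ) + 1 ≤ #s := by exact_mod_cast hj
    rw [sum_sigmaE_erase]
    nlinarith [sigmaE_nonneg hκ0 j]
  calc c * sigmaE s j κ ^ 2 ≤ c * (∑ a ∈ s, sigmaE (s.erase a) j κ) ^ 2 := by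
        gcongr
        exact sigmaE_nonneg hκ0 j
    _ ≤ c * (#s * ∑ a ∈ s, sigmaE (s.erase a) j κ ^ 2) := by
        gcongr
        exact sq_sum_le_card_mul_sum_sq
    _ = #s * ∑ a ∈ s, c * sigmaE (s.erase a) j κ ^ 2 := by
        rw [mul_sum, mul_sum, mul_sum]
        exact sum_congr rfl fun a _ => by ring
    _ ≤ #s * ∑ a ∈ s, κ a * sigmaE (s.erase a) j κ ^ 2 := by
        gcongr with a ha
        exact hκ a ha

theorem sigmaE_mul_sigmaE_sub_three_le (hκ : ∀ i ∈ s, 0 ≤ κ i) {γ : ℝ} (hγ : 0 ≤ γ)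
    (hN : ∀ j, sigmaE s j κ * sigmaE s (j - 2) κ ≤ γ * sigmaE s (j - 1) κ ^ 2) (j : ℤ) :
    sigmaE s j κ * sigmaE s (j - 3) κ ≤ γ ^ 2 * (sigmaE s (j - 1) κ * sigmaE s (j - 2) κ) := by
  have hN' := hN (j - 1)
  rw [show j - 1 - 2 = j - 3 by ring, show j - 1 - 1 = j - 2 by ring] at hN'
  have hnn := sigmaE_nonneg hκ
  rcases (mul_nonneg (hnn (j - 1)) (hnn (j - 2))).lt_or_eq with hpos | hzero
  · refine le_of_mul_le_mul_right ?_ hpos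
    nlinarith [mul_le_mul (hN j) hN' (mul_nonneg (hnn (j - 1)) (hnn (j - 3)))
      (mul_nonneg hγ (sq_nonneg (sigmaE s (j - 1) κ))), hnn j, hnn (j - 2)]
  · -- a vanishing `σ_r` with `r ≥ 0` forces `σ_j = 0`; with `r < 0` it forces `σ_{j-3} = 0`
    have : sigmaE s j κ = 0 ∨ sigmaE s (j - 3) κ = 0 := by
      rcases mul_eq_zero.1 hzero.symm with h | h
      · by_cases hj : 0 ≤ j - 1
        · exact .inl (by simpa using sigmaE_succ_eq_zero hκ hj h)
        · exact .inr (sigmaE_of_neg (by omega))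
      · by_cases hj : 0 ≤ j - 2
        · have h1 := sigmaE_succ_eq_zero hκ hj h
          rw [show j - 2 + 1 = j - 1 by ring] at h1
          exact .inl (by simpa using sigmaE_succ_eq_zero hκ (by omega) h1)
        · exact .inr (sigmaE_of_neg (by omega))
    rw [← hzero, mul_zero]
    rcases this with h | h <;> simp [h]

theorem sigmaE_mul_sigmaE_sub_two_le (hκ : ∀ i ∈ s, 0 ≤ κ i) (j : ℤ) :
    sigmaE s j κ * sigmaE s (j - 2) κ ≤ newtonConst #s * sigmaE s (j - 1) κ ^ 2 := by
  induction s using Finset.induction generalizing j with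
  | empty =>
    rcases eq_or_ne j 0 with rfl | hj
    · simp [sigmaE_empty, newtonConst]
    · simp [sigmaE_empty hj, newtonConst]
  | @insert b U hb ih =>
    have hκU : ∀ i ∈ U, 0 ≤ κ i := fun i hi => hκ i (mem_insert_of_mem hi)
    have hx : 0 ≤ κ b := hκ b (mem_insert_self b U)
    have hγ := newtonConst_nonneg #U
    have hγ' : newtonConst (#U + 1) = (1 + newtonConst #U ^ 2) / 2 := rfl
    have hcross := mul_le_mul_of_nonneg_left
      (sigmaE_mul_sigmaE_sub_three_le hκU hγ (ih hκU) j) hx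
    have hN1 := (ih hκU j).trans (mul_le_mul_of_nonneg_right (newtonConst_le_succ #U)
      (sq_nonneg _))
    have hN2 := ih hκU (j - 1)
    rw [show j - 1 - 2 = j - 3 by ring, show j - 1 - 1 = j - 2 by ring] at hN2
    have hN2' := mul_le_mul_of_nonneg_left (hN2.trans (mul_le_mul_of_nonneg_right
      (newtonConst_le_succ #U) (sq_nonneg _))) (sq_nonneg (κ b))
    rw [card_insert_of_notMem hb, sigmaE_insert hb, sigmaE_insert hb, sigmaE_insert hb,
      show j - 2 - 1 = j - 3 by ring, show j - 1 - 1 = j - 2 by ring, hγ']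
    rw [hγ'] at hN1 hN2'
    nlinarith [mul_nonneg hx (sigmaE_nonneg hκU (j - 1)), sigmaE_nonneg hκU (j - 2)]

end ElementarySymmetric

theorem mul_sq_le_sq_sub_of_abs_le {x y δ : ℝ} (hδ : δ ≤ 1) (h : |y| ≤ δ * |x|) :
    (1 - δ) ^ 2 * x ^ 2 ≤ (y - x) ^ 2 := by
  have hx : (1 - δ) * |x| ≤ |y - x| := by
    have := abs_sub_abs_le_abs_sub x y
    rw [abs_sub_comm] at this
    linarith
  calc (1 - δ) ^ 2 * x ^ 2 = ((1 - δ) * |x|) ^ 2 := by rw [mul_pow, sq_abs]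
    _ ≤ |y - x| ^ 2 := pow_le_pow_left₀ (mul_nonneg (by linarith) (abs_nonneg x)) hx 2
    _ = (y - x) ^ 2 := sq_abs _

section Fintype

variable {ι : Type*} [Fintype ι] [DecidableEq ι] {κ : ι → ℝ}

theorem sigmaV_mul_sigmaV1_le (hκ : ∀ i, 0 < κ i) {i₀ : ι} (hmin : ∀ i, κ i₀ ≤ κ i) {k : ℤ}
    (hk : k < Fintype.card ι) :
    sigmaV k κ * sigmaV1 (k - 1) κ i₀
      ≤ Fintype.card ι * ∑ a ∈ univ.erase i₀, κ a * sigmaV2 (k - 1) κ a i₀ ^ 2 := by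
  set S := univ.erase i₀
  have hκS : ∀ i ∈ S, 0 ≤ κ i := fun i _ => (hκ i).le
  have hS : (#S : ℝ) + 1 = Fintype.card ι := by
    rw [card_erase_of_mem (mem_univ i₀), card_univ,
      Nat.cast_sub (Fintype.card_pos_iff.2 ⟨i₀⟩)]
    ring
  have hdouble := sigmaE_mul_le_sum_mul_erase hκS (show k - 1 < k by omega)
  have hsquare := mul_sq_sigmaE_le_card_mul_sum (hκ i₀).le (fun i _ => hmin i)
    (show k - 1 < #S by rw [card_erase_of_mem (mem_univ i₀), card_univ]; omega)
  have hσ : sigmaV k κ = sigmaE S k κ + κ i₀ * sigmaE S (k - 1) κ := by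
    rw [sigmaV, ← insert_erase (mem_univ i₀), sigmaE_insert (notMem_erase i₀ univ)]
  have hsum : ∑ a ∈ S, κ a * sigmaV2 (k - 1) κ a i₀ ^ 2
      = ∑ a ∈ S, κ a * sigmaE (S.erase a) (k - 1) κ ^ 2 :=
    sum_congr rfl fun a _ => by rw [sigmaV2, erase_right_comm]
  simp only [← sq] at hdouble
  rw [hσ, sigmaV1, hsum, ← hS]
  change _ * sigmaE S (k - 1) κ ≤ _
  linarith

theorem mul_sum_le_sum_offDiag {ξ : ι → ℝ} (hκ : ∀ i, 0 ≤ κ i) (k : ℤ) {i₀ : ι} {t : ℝ}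
    (ht : 0 ≤ t) (hξ : ∀ α ≠ i₀, t ≤ (κ α * ξ α - κ i₀ * ξ i₀) ^ 2) :
    (1 - newtonConst (Fintype.card ι - 2)) * κ i₀ * t
        * ∑ a ∈ univ.erase i₀, κ a * sigmaV2 (k - 1) κ a i₀ ^ 2
      ≤ ∑ α, ∑ β ∈ univ.erase α,
          (sigmaV2 (k - 1) κ α β ^ 2 - sigmaV2 k κ α β * sigmaV2 (k - 2) κ α β)
            * κ α * κ β * (κ α * ξ α - κ β * ξ β) ^ 2 := by
  set γ := newtonConst (Fintype.card ι - 2)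
  have hγ : 0 ≤ 1 - γ := by linarith [newtonConst_lt_one (Fintype.card ι - 2)]
  set W : ι → ι → ℝ := fun α β =>
    sigmaV2 (k - 1) κ α β ^ 2 - sigmaV2 k κ α β * sigmaV2 (k - 2) κ α β
  have hW : ∀ α, ∀ β ∈ univ.erase α, (1 - γ) * sigmaV2 (k - 1) κ α β ^ 2 ≤ W α β := by
    intro α β hβ
    have hcard : #((univ.erase α).erase β) = Fintype.card ι - 2 := by
      rw [card_erase_of_mem hβ, card_erase_of_mem (mem_univ α), card_univ]
      omega
    have hN := sigmaE_mul_sigmaE_sub_two_le (s := (univ.erase α).erase β) (fun i _ => hκ i) k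
    rw [hcard] at hN
    simp only [W, sigmaV2]
    linarith
  have hW0 : ∀ α, ∀ β ∈ univ.erase α, 0 ≤ W α β * κ α * κ β :=
    fun α β hβ => mul_nonneg (mul_nonneg ((mul_nonneg hγ (sq_nonneg _)).trans (hW α β hβ))
      (hκ α)) (hκ β)
  have hterm : ∀ α ∈ univ.erase i₀, (1 - γ) * κ i₀ * t * (κ α * sigmaV2 (k - 1) κ α i₀ ^ 2)
      ≤ W α i₀ * κ α * κ i₀ * (κ α * ξ α - κ i₀ * ξ i₀) ^ 2 := by
    intro α hα
    have hi₀ : i₀ ∈ univ.erase α := mem_erase.2 ⟨(ne_of_mem_erase hα).symm, mem_univ i₀⟩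
    calc (1 - γ) * κ i₀ * t * (κ α * sigmaV2 (k - 1) κ α i₀ ^ 2)
        = (1 - γ) * sigmaV2 (k - 1) κ α i₀ ^ 2 * (κ α * κ i₀ * t) := by ring
      _ ≤ W α i₀ * (κ α * κ i₀ * t) :=
        mul_le_mul_of_nonneg_right (hW α i₀ hi₀) (mul_nonneg (mul_nonneg (hκ α) (hκ i₀)) ht)
      _ ≤ W α i₀ * κ α * κ i₀ * (κ α * ξ α - κ i₀ * ξ i₀) ^ 2 := by
        rw [← mul_assoc, ← mul_assoc]
        exact mul_le_mul_of_nonneg_left (hξ α (ne_of_mem_erase hα)) (hW0 α i₀ hi₀)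
  calc _ = ∑ α ∈ univ.erase i₀, (1 - γ) * κ i₀ * t * (κ α * sigmaV2 (k - 1) κ α i₀ ^ 2) :=
        mul_sum _ _ _
    _ ≤ ∑ α ∈ univ.erase i₀, W α i₀ * κ α * κ i₀ * (κ α * ξ α - κ i₀ * ξ i₀) ^ 2 :=
        sum_le_sum hterm
    _ ≤ ∑ α ∈ univ.erase i₀, ∑ β ∈ univ.erase α,
          W α β * κ α * κ β * (κ α * ξ α - κ β * ξ β) ^ 2 := by
        refine sum_le_sum fun α hα => ?_
        refine single_le_sum (f := fun β => W α β * κ α * κ β * (κ α * ξ α - κ β * ξ β) ^ 2)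
          (fun β hβ => mul_nonneg (hW0 α β hβ) (sq_nonneg _)) ?_
        exact mem_erase.2 ⟨(ne_of_mem_erase hα).symm, mem_univ i₀⟩
    _ ≤ _ := sum_le_sum_of_subset_of_nonneg (erase_subset i₀ univ) fun α _ _ =>
        sum_nonneg fun β hβ => mul_nonneg (hW0 α β hβ) (sq_nonneg _)

end Fintype

/-- Case 2 estimate, (2.20)–(2.22): there is `c'_{n,k} > 0` depending
only on `n, k` such that for every `δ₀ ∈ (0,1)`, every `λ₁ ≥ ⋯ ≥ λ_n > 0` (with
`κ_α = 1/λ_α`) and every `ξ ∈ ℝⁿ` with `|ξ_α/λ_α| < δ₀ |ξ₁/λ₁|` for all `α ≥ 2`: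
`(1/(2σ_k(κ))) Σ_{α≠β} (σ_{k-1}(κ|αβ)² - σ_k(κ|αβ)σ_{k-2}(κ|αβ)) κ_ακ_β (κ_αξ_α-κ_βξ_β)²
 ≥ c'_{n,k} (1-δ₀)² σ_{k-1}(κ|1) κ₁³ ξ₁²`. -/
theorem stmt_12 (n k : ℕ) (hn : 2 ≤ n) (hk2 : k ≤ n - 1) :
    ∃ c' : ℝ, 0 < c' ∧
      ∀ δ₀ : ℝ, 0 < δ₀ → δ₀ < 1 →
      ∀ lam : Fin n → ℝ, (∀ α, 0 < lam α) → (∀ α β : Fin n, α ≤ β → lam β ≤ lam α) →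
      ∀ ξ : Fin n → ℝ,
        let i0 : Fin n := ⟨0, by omega⟩
        let κ : Fin n → ℝ := fun α => (lam α)⁻¹
        (∀ α : Fin n, α ≠ i0 → |ξ α / lam α| < δ₀ * |ξ i0 / lam i0|) →
        (1 / (2 * sigmaV (k : ℤ) κ)) *
            ∑ α, ∑ β ∈ Finset.univ.erase α,
              ((sigmaV2 ((k : ℤ) - 1) κ α β) ^ 2
                  - sigmaV2 (k : ℤ) κ α β * sigmaV2 ((k : ℤ) - 2) κ α β) *
                κ α * κ β * (κ α * ξ α - κ β * ξ β) ^ 2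
          ≥ c' * (1 - δ₀) ^ 2 * sigmaV1 ((k : ℤ) - 1) κ i0 * (κ i0) ^ 3 * (ξ i0) ^ 2 := by
  set γ := newtonConst (n - 2) with hγ_def
  have hγ : γ < 1 := newtonConst_lt_one _
  refine ⟨(1 - γ) / (2 * n), div_pos (by linarith) (by positivity), ?_⟩
  intro δ₀ _ hδ₁ lam hlam hmono ξ i0 κ hξ
  have hκ : ∀ α, 0 < κ α := fun α => inv_pos.2 (hlam α)
  have hmin : ∀ α, κ i0 ≤ κ α := fun α =>
    inv_anti₀ (hlam α) (hmono i0 α (Fin.le_def.2 (Nat.zero_le α.val)))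
  have hangle : ∀ α ≠ i0, (1 - δ₀) ^ 2 * (κ i0 * ξ i0) ^ 2 ≤ (κ α * ξ α - κ i0 * ξ i0) ^ 2 :=
    fun α hα => mul_sq_le_sq_sub_of_abs_le hδ₁.le
      (by simpa only [div_eq_inv_mul] using (hξ α hα).le)
  have hD := mul_sum_le_sum_offDiag (fun α => (hκ α).le) k (by positivity) hangle
  have hQ := sigmaV_mul_sigmaV1_le hκ hmin (k := k) (by simp; omega)
  have hσ : 0 < sigmaV k κ := sigmaE_pos (fun i _ => hκ i) (by omega) (by simp; omega)
  simp only [Fintype.card_fin, ← hγ_def] at hD hQ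
  rw [ge_iff_le, one_div_mul_eq_div, le_div_iff₀ (by positivity)]
  have hn0 : (0 : ℝ) < n := by positivity
  have hA : 0 ≤ (1 - γ) * κ i0 * ((1 - δ₀) ^ 2 * (κ i0 * ξ i0) ^ 2) / n :=
    div_nonneg (mul_nonneg (mul_nonneg (by linarith) (hκ i0).le) (by positivity)) hn0.le
  calc _ = (1 - γ) * κ i0 * ((1 - δ₀) ^ 2 * (κ i0 * ξ i0) ^ 2) / n
        * (sigmaV k κ * sigmaV1 (k - 1) κ i0) := by field_simp
    _ ≤ (1 - γ) * κ i0 * ((1 - δ₀) ^ 2 * (κ i0 * ξ i0) ^ 2) / n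
        * (n * ∑ a ∈ univ.erase i0, κ a * sigmaV2 (k - 1) κ a i0 ^ 2) :=
        mul_le_mul_of_nonneg_left hQ hA
    _ = _ := by field_simp
    _ ≤ _ := hD
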